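/- Let φ be an LTL formula in negation normal form and ξ an infinite word over 2^AP. If ξ ⊨ φ, then there exists n ≥ 1 such that the prefix ξ^n satisfies ξ^n ⊨_f φ. -/

import Mathlib

namespace DNFLTL

/-- Literals: atomic propositions or their negations. -/
inductive Lit (AP : Type) : Type
  | pos : AP → Lit AP
  | neg : AP → Lit AP
deriving DecidableEq

/-- LTL formulas in negation normal form:
`True | a | ¬a | φ∧φ | φ∨φ | φ U φ | φ R φ | X φ`. -/
inductive LTL (AP : Type) : Type
  | tt    : LTL AP
  | atom  : AP → LTL AP
  | natom : AP → LTL AP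
  | and   : LTL AP → LTL AP → LTL AP
  | or    : LTL AP → LTL AP → LTL AP
  | untl  : LTL AP → LTL AP → LTL AP
  | rel   : LTL AP → LTL AP → LTL AP
  | next  : LTL AP → LTL AP
deriving DecidableEq

variable {AP : Type}

/-- The suffix `ξ_i` of an infinite word. -/
def suff (ξ : ℕ → Set AP) (i : ℕ) : ℕ → Set AP := fun n => ξ (n + i)

/-- Standard LTL satisfaction `ξ ⊨ φ`. -/
def Sat : (ℕ → Set AP) → LTL AP → Prop
  | _, .tt => True
  | ξ, .atom a => a ∈ ξ 0
  | ξ, .natom a => a ∉ ξ 0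
  | ξ, .and φ ψ => Sat ξ φ ∧ Sat ξ ψ
  | ξ, .or φ ψ => Sat ξ φ ∨ Sat ξ ψ
  | ξ, .untl φ ψ => ∃ i, Sat (suff ξ i) ψ ∧ ∀ j < i, Sat (suff ξ j) φ
  | ξ, .rel φ ψ => (∀ i, Sat (suff ξ i) ψ) ∨
      ∃ i, Sat (suff ξ i) φ ∧ Sat (suff ξ i) ψ ∧ ∀ j < i, Sat (suff ξ j) ψ
  | ξ, .next φ => Sat (suff ξ 1) φ

/-- A letter `ω ∈ 2^AP` satisfies a literal. -/
def SatLit (ω : Set AP) : Lit AP → Prop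
  | .pos a => a ∈ ω
  | .neg a => a ∉ ω

/-- A letter satisfies a finite conjunction of literals (represented as its set of literals). -/
def SatConj (ω : Set AP) (α : Set (Lit AP)) : Prop := ∀ l ∈ α, SatLit ω l

/-- `DNF φ`: the set of clauses `α ∧ X ψ` of the disjunctive normal form of `φ`.
A clause is a pair `(α, ψ)` where `α` is a finite conjunction of literals,
represented as its set `CF(α)` of literals. -/
def DNF : LTL AP → Set (Set (Lit AP) × LTL AP)
  | .tt => {(∅, .tt)}
  | .atom a => {({Lit.pos a}, .tt)}
  | .natom a => {({Lit.neg a}, .tt)}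
  | .next φ => {(∅, φ)}
  | .or φ ψ => DNF φ ∪ DNF ψ
  | .and φ ψ => {c | ∃ c1 ∈ DNF φ, ∃ c2 ∈ DNF ψ, c = (c1.1 ∪ c2.1, .and c1.2 c2.2)}
  | .untl φ ψ => DNF ψ ∪ {c | ∃ c1 ∈ DNF φ, c = (c1.1, .and c1.2 (.untl φ ψ))}
  | .rel φ ψ =>
      {c | ∃ c1 ∈ DNF φ, ∃ c2 ∈ DNF ψ, c = (c1.1 ∪ c2.1, .and c1.2 c2.2)} ∪
      {c | ∃ c2 ∈ DNF ψ, c = (c2.1, .and c2.2 (.rel φ ψ))}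

/-- `φ →ω ψ`: transition on a letter. -/
def StepW (φ : LTL AP) (ω : Set AP) (ψ : LTL AP) : Prop :=
  ∃ α, (α, ψ) ∈ DNF φ ∧ SatConj ω α

/-- `φ →η ψ`: expansion along a finite word. -/
def StepWord : LTL AP → List (Set AP) → LTL AP → Prop
  | φ, [], ψ => φ = ψ
  | φ, ω :: η, ψ => ∃ χ, StepW φ ω χ ∧ StepWord χ η ψ

/-- `φ →α ψ` for some label `α`: a single expansion step. -/
def Expand (φ ψ : LTL AP) : Prop := ∃ α, (α, ψ) ∈ DNF φ

/-- `EF φ`: all formulas expandable from `φ`, together with `φ` itself. -/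
def EF (φ : LTL AP) : Set (LTL AP) := {ψ | Relation.ReflTransGen Expand φ ψ}

/-- `φ ↪ ψ`: expandable by a nonempty chain. -/
def ExpandPlus (φ ψ : LTL AP) : Prop := Relation.TransGen Expand φ ψ

/-- The prefix `ξ^n` of an infinite word (first `n` letters). -/
def pref (ξ : ℕ → Set AP) (n : ℕ) : List (Set AP) := (List.range n).map ξ

/-- The finite segment `ξ(a) ξ(a+1) … ξ(b-1)` of an infinite word. -/
def seg (ξ : ℕ → Set AP) (a b : ℕ) : List (Set AP) :=
  (List.range (b - a)).map (fun j => ξ (a + j))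

/-- `φ →ξ φ` for an infinite word `ξ`: `ξ` can be partitioned into finite nonempty
words `η0 η1 η2 …` (given by strictly monotone cut points) with `φ →ηi φ` for all `i`. -/
def LoopOn (φ : LTL AP) (ξ : ℕ → Set AP) : Prop :=
  ∃ k : ℕ → ℕ, k 0 = 0 ∧ StrictMono k ∧ ∀ i, StepWord φ (seg ξ (k i) (k (i + 1))) φ

/-- `CF φ`: the conjuncts of `φ`, with `CF True = ∅`. -/
def CF : LTL AP → Set (LTL AP)
  | .tt => ∅
  | .and φ ψ => CF φ ∪ CF ψ
  | φ => {φ}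

/-- `S ⊨_f φ` for a set of literals `S`. -/
def SatF (S : Set (Lit AP)) : LTL AP → Prop
  | .tt => True
  | .atom a => Lit.pos a ∈ S
  | .natom a => Lit.neg a ∈ S
  | .and φ ψ => SatF S φ ∧ SatF S ψ
  | .or φ ψ => SatF S φ ∨ SatF S ψ
  | .untl _ ψ => SatF S ψ
  | .rel _ ψ => SatF S ψ
  | .next ψ => SatF S ψ

/-- A labelled expansion chain `φ = φ0 →α0 φ1 →α1 … →αn φ(n+1) = χ` along the
finite word `η = ω0…ωn` with `ωi ⊨ αi`, accumulating `S = ⋃ CF(αj)`. -/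
inductive LChain : LTL AP → List (Set AP) → Set (Lit AP) → LTL AP → Prop
  | nil (φ : LTL AP) : LChain φ [] ∅ φ
  | cons {φ ψ χ : LTL AP} {η : List (Set AP)} {S α : Set (Lit AP)} {ω : Set AP} :
      (α, ψ) ∈ DNF φ → SatConj ω α → LChain ψ η S χ → LChain φ (ω :: η) (α ∪ S) χ

/-- `η ⊨_f φ` for a finite word `η`. -/
def SatWF (η : List (Set AP)) (φ : LTL AP) : Prop :=
  ∃ S χ, LChain φ η S χ ∧ SatF S φ

/-- The obligation set `OS φ`. -/
def OS : LTL AP → Set (Set (Lit AP))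
  | .tt => {∅}
  | .atom a => {{Lit.pos a}}
  | .natom a => {{Lit.neg a}}
  | .next ψ => OS ψ
  | .or φ ψ => OS φ ∪ OS ψ
  | .and φ ψ => {S | ∃ S1 ∈ OS φ, ∃ S2 ∈ OS ψ, S = S1 ∪ S2}
  | .untl _ ψ => OS ψ
  | .rel _ ψ => OS ψ

/-- The subformulas of a formula. -/
def subf [DecidableEq AP] : LTL AP → Finset (LTL AP)
  | .tt => {.tt}
  | .atom a => {.atom a}
  | .natom a => {.natom a}
  | .and φ ψ => insert (.and φ ψ) (subf φ ∪ subf ψ)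
  | .or φ ψ => insert (.or φ ψ) (subf φ ∪ subf ψ)
  | .untl φ ψ => insert (.untl φ ψ) (subf φ ∪ subf ψ)
  | .rel φ ψ => insert (.rel φ ψ) (subf φ ∪ subf ψ)
  | .next φ => insert (.next φ) (subf φ)

/-- `cl φ`: the subformulas of `φ` together with `True`. -/
def cl [DecidableEq AP] (φ : LTL AP) : Finset (LTL AP) := insert .tt (subf φ)

/-- The atomic propositions appearing in a formula. -/
def atoms [DecidableEq AP] : LTL AP → Finset AP
  | .tt => ∅
  | .atom a => {a}
  | .natom a => {a}
  | .and φ ψ => atoms φ ∪ atoms ψ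
  | .or φ ψ => atoms φ ∪ atoms ψ
  | .untl φ ψ => atoms φ ∪ atoms ψ
  | .rel φ ψ => atoms φ ∪ atoms ψ
  | .next φ => atoms φ

/-- No subformula has `R` as root operator. -/
def ReleaseFree : LTL AP → Prop
  | .tt => True
  | .atom _ => True
  | .natom _ => True
  | .and φ ψ => ReleaseFree φ ∧ ReleaseFree ψ
  | .or φ ψ => ReleaseFree φ ∧ ReleaseFree ψ
  | .untl φ ψ => ReleaseFree φ ∧ ReleaseFree ψ
  | .rel _ _ => False
  | .next φ => ReleaseFree φ

/-- No subformula has `U` as root operator. -/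
def UntilFree : LTL AP → Prop
  | .tt => True
  | .atom _ => True
  | .natom _ => True
  | .and φ ψ => UntilFree φ ∧ UntilFree ψ
  | .or φ ψ => UntilFree φ ∧ UntilFree ψ
  | .untl _ _ => False
  | .rel φ ψ => UntilFree φ ∧ UntilFree ψ
  | .next φ => UntilFree φ

/-- The root operator is Until or Release. -/
def isUntilOrRelease : LTL AP → Prop
  | .untl _ _ => True
  | .rel _ _ => True
  | _ => False

/-! DNF expansion is complete for satisfaction: if `ξ ⊨ φ`, some clause `α ∧ X ψ` of `DNF φ` has
`ξ(0) ⊨ α` and `ξ_1 ⊨ ψ`. Iterating this, `φ` expands along every prefix `ξ^n` so that the residual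
formula still holds on `ξ_n`; such an expansion can always be prolonged, which only enlarges the
collected literal set `S`. The theorem is proved by induction on `φ` for expansions with satisfied
residual. For `φ1 ∧ φ2` both expansions are prolonged to a common length and run in parallel; for
`U` and `R` one induces on the position of the witness, unrolling the fixpoint
`φ1 U φ2 ≡ φ2 ∨ (φ1 ∧ X (φ1 U φ2))` (and its dual) one letter at a time, while an `R` whose right
argument holds forever is unrolled once and its tail is merely prolonged. -/

theorem suff_suff (ξ : ℕ → Set AP) (a b : ℕ) : suff (suff ξ a) b = suff ξ (b + a) := by
  funext n
  simp [suff, Nat.add_assoc]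

theorem pref_succ (ξ : ℕ → Set AP) (n : ℕ) : pref ξ (n + 1) = ξ 0 :: pref (suff ξ 1) n := by
  simp only [pref, List.range_succ_eq_map, List.map_cons, List.map_map]
  rfl

theorem pref_add (ξ : ℕ → Set AP) (m k : ℕ) : pref ξ (m + k) = pref ξ m ++ pref (suff ξ m) k := by
  simp only [pref, List.range_add, List.map_append, List.map_map]
  congr 1
  exact List.map_congr_left fun j _ => by simp [suff, Nat.add_comm]

theorem forall_lt_succ_sat_suff {ξ : ℕ → Set AP} {φ : LTL AP} {i : ℕ}
    (h : ∀ j < i + 1, Sat (suff ξ j) φ) : Sat ξ φ ∧ ∀ j < i, Sat (suff (suff ξ 1) j) φ :=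
  ⟨h 0 i.succ_pos, fun j hj => by rw [suff_suff]; exact h (j + 1) (by omega)⟩

theorem Sat.untl_unfold {ξ : ℕ → Set AP} {φ1 φ2 : LTL AP} (h : Sat ξ (.untl φ1 φ2)) :
    Sat ξ φ2 ∨ Sat ξ φ1 ∧ Sat (suff ξ 1) (.untl φ1 φ2) := by
  obtain ⟨_ | i, hi, hj⟩ := h
  · exact Or.inl hi
  · obtain ⟨h1, hj⟩ := forall_lt_succ_sat_suff hj
    exact Or.inr ⟨h1, i, by rwa [suff_suff], hj⟩

theorem Sat.rel_unfold {ξ : ℕ → Set AP} {φ1 φ2 : LTL AP} (h : Sat ξ (.rel φ1 φ2)) :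
    Sat ξ φ1 ∧ Sat ξ φ2 ∨ Sat ξ φ2 ∧ Sat (suff ξ 1) (.rel φ1 φ2) := by
  rcases h with hall | ⟨_ | i, hi1, hi2, hj⟩
  · exact Or.inr ⟨hall 0, Or.inl fun i => by rw [suff_suff]; exact hall (i + 1)⟩
  · exact Or.inl ⟨hi1, hi2⟩
  · obtain ⟨h2, hj⟩ := forall_lt_succ_sat_suff hj
    exact Or.inr ⟨h2, Or.inr ⟨i, by rwa [suff_suff], by rwa [suff_suff], hj⟩⟩

theorem satConj_empty (ω : Set AP) : SatConj ω ∅ :=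
  fun _ hl => absurd hl (Set.notMem_empty _)

theorem satConj_singleton {ω : Set AP} {l : Lit AP} (h : SatLit ω l) : SatConj ω {l} :=
  fun _ hl => hl ▸ h

theorem satConj_union {ω : Set AP} {α β : Set (Lit AP)} (hα : SatConj ω α) (hβ : SatConj ω β) :
    SatConj ω (α ∪ β) :=
  fun l hl => hl.elim (hα l) (hβ l)

theorem satF_mono {S S' : Set (Lit AP)} (hsub : S ⊆ S') {φ : LTL AP} (h : SatF S φ) :
    SatF S' φ := by
  induction φ with
  | tt => trivial
  | atom _ | natom _ => exact hsub h
  | and _ _ ih1 ih2 => exact ⟨ih1 h.1, ih2 h.2⟩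
  | or _ _ ih1 ih2 => exact h.imp ih1 ih2
  | untl _ _ _ ih2 | rel _ _ _ ih2 => exact ih2 h
  | next _ ih => exact ih h

theorem Sat.exists_mem_dnf {ξ : ℕ → Set AP} {φ : LTL AP} (h : Sat ξ φ) :
    ∃ α ψ, (α, ψ) ∈ DNF φ ∧ SatConj (ξ 0) α ∧ Sat (suff ξ 1) ψ := by
  induction φ with
  | tt => exact ⟨∅, .tt, rfl, satConj_empty _, trivial⟩
  | atom a => exact ⟨{Lit.pos a}, .tt, rfl, satConj_singleton h, trivial⟩
  | natom a => exact ⟨{Lit.neg a}, .tt, rfl, satConj_singleton h, trivial⟩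
  | and _ _ ih1 ih2 =>
    obtain ⟨α1, ψ1, hm1, hc1, hs1⟩ := ih1 h.1
    obtain ⟨α2, ψ2, hm2, hc2, hs2⟩ := ih2 h.2
    exact ⟨α1 ∪ α2, .and ψ1 ψ2, ⟨_, hm1, _, hm2, rfl⟩, satConj_union hc1 hc2, hs1, hs2⟩
  | or _ _ ih1 ih2 =>
    rcases h with h | h
    · obtain ⟨α, ψ, hm, hc, hs⟩ := ih1 h
      exact ⟨α, ψ, Or.inl hm, hc, hs⟩
    · obtain ⟨α, ψ, hm, hc, hs⟩ := ih2 h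
      exact ⟨α, ψ, Or.inr hm, hc, hs⟩
  | untl φ1 φ2 ih1 ih2 =>
    rcases h.untl_unfold with h2 | ⟨h1, hnext⟩
    · obtain ⟨α, ψ, hm, hc, hs⟩ := ih2 h2
      exact ⟨α, ψ, Or.inl hm, hc, hs⟩
    · obtain ⟨α, ψ, hm, hc, hs⟩ := ih1 h1
      exact ⟨α, .and ψ (.untl φ1 φ2), Or.inr ⟨_, hm, rfl⟩, hc, hs, hnext⟩
  | rel φ1 φ2 ih1 ih2 =>
    rcases h.rel_unfold with ⟨h1, h2⟩ | ⟨h2, hnext⟩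
    · obtain ⟨α1, ψ1, hm1, hc1, hs1⟩ := ih1 h1
      obtain ⟨α2, ψ2, hm2, hc2, hs2⟩ := ih2 h2
      exact ⟨α1 ∪ α2, .and ψ1 ψ2, Or.inl ⟨_, hm1, _, hm2, rfl⟩, satConj_union hc1 hc2, hs1, hs2⟩
    · obtain ⟨α, ψ, hm, hc, hs⟩ := ih2 h2
      exact ⟨α, .and ψ (.rel φ1 φ2), Or.inr ⟨_, hm, rfl⟩, hc, hs, hnext⟩
  | next φ => exact ⟨∅, φ, rfl, satConj_empty _, h⟩

theorem LChain.append {φ χ1 χ2 : LTL AP} {η1 η2 : List (Set AP)} {S1 S2 : Set (Lit AP)}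
    (h1 : LChain φ η1 S1 χ1) (h2 : LChain χ1 η2 S2 χ2) : LChain φ (η1 ++ η2) (S1 ∪ S2) χ2 := by
  induction h1 with
  | nil => rwa [Set.empty_union]
  | cons hm hc _ ih =>
    rw [Set.union_assoc]
    exact .cons hm hc (ih h2)

theorem LChain.and {φ1 φ2 χ1 χ2 : LTL AP} {η : List (Set AP)} {S1 S2 : Set (Lit AP)}
    (h1 : LChain φ1 η S1 χ1) (h2 : LChain φ2 η S2 χ2) :
    LChain (.and φ1 φ2) η (S1 ∪ S2) (.and χ1 χ2) := by
  induction h1 generalizing φ2 S2 χ2 with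
  | nil =>
    cases h2
    rw [Set.union_empty]
    exact .nil _
  | cons hm1 hc1 _ ih =>
    cases h2 with
    | cons hm2 hc2 h2 =>
      rw [Set.union_union_union_comm]
      exact .cons ⟨_, hm1, _, hm2, rfl⟩ (satConj_union hc1 hc2) (ih h2)

def Run (φ : LTL AP) (ξ : ℕ → Set AP) (n : ℕ) (S : Set (Lit AP)) : Prop :=
  ∃ χ, LChain φ (pref ξ n) S χ ∧ Sat (suff ξ n) χ

namespace Run

variable {φ ψ : LTL AP} {ξ : ℕ → Set AP} {n : ℕ} {S : Set (Lit AP)}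

theorem zero (h : Sat ξ φ) : Run φ ξ 0 ∅ := ⟨φ, .nil φ, h⟩

theorem cons {α : Set (Lit AP)} (hm : (α, ψ) ∈ DNF φ) (hc : SatConj (ξ 0) α)
    (h : Run ψ (suff ξ 1) n S) : Run φ ξ (n + 1) (α ∪ S) := by
  obtain ⟨χ, hch, hs⟩ := h
  refine ⟨χ, ?_, by rwa [suff_suff] at hs⟩
  rw [pref_succ]
  exact .cons hm hc hch

theorem uncons (h : Run φ ξ (n + 1) S) : ∃ α ψ S', (α, ψ) ∈ DNF φ ∧ SatConj (ξ 0) α ∧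
    Run ψ (suff ξ 1) n S' ∧ S = α ∪ S' := by
  obtain ⟨χ, hch, hs⟩ := h
  rw [pref_succ] at hch
  cases hch with
  | cons hm hc hch => exact ⟨_, _, _, hm, hc, ⟨_, hch, by rwa [suff_suff]⟩, rfl⟩

theorem and {φ1 φ2 : LTL AP} {S1 S2 : Set (Lit AP)} (h1 : Run φ1 ξ n S1) (h2 : Run φ2 ξ n S2) :
    Run (.and φ1 φ2) ξ n (S1 ∪ S2) :=
  let ⟨χ1, hch1, hs1⟩ := h1
  let ⟨χ2, hch2, hs2⟩ := h2
  ⟨.and χ1 χ2, hch1.and hch2, hs1, hs2⟩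

theorem lift {φ' : LTL AP} (hsub : DNF φ ⊆ DNF φ') (h : Run φ ξ (n + 1) S) :
    Run φ' ξ (n + 1) S := by
  obtain ⟨α, ψ, S', hm, hc, hψ, rfl⟩ := h.uncons
  exact .cons (hsub hm) hc hψ

/-- `hdnf` holds for `θ = φ1 U φ2, ρ = φ1` and for `θ = φ1 R φ2, ρ = φ2`. -/
theorem cons_and {ρ θ : LTL AP} {S' : Set (Lit AP)}
    (hdnf : ∀ c ∈ DNF ρ, (c.1, .and c.2 θ) ∈ DNF θ) (hρ : Run ρ ξ (n + 1) S)
    (hθ : Run θ (suff ξ 1) n S') : Run θ ξ (n + 1) (S ∪ S') := by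
  obtain ⟨α, ψ, S, hm, hc, h, rfl⟩ := hρ.uncons
  rw [Set.union_assoc]
  exact .cons (hdnf _ hm) hc (h.and hθ)

end Run

theorem Sat.exists_run {ξ : ℕ → Set AP} {φ : LTL AP} (h : Sat ξ φ) (n : ℕ) :
    ∃ S, Run φ ξ n S := by
  induction n generalizing ξ φ with
  | zero => exact ⟨∅, .zero h⟩
  | succ n ih =>
    obtain ⟨α, ψ, hm, hc, hs⟩ := h.exists_mem_dnf
    obtain ⟨S, hS⟩ := ih hs
    exact ⟨α ∪ S, .cons hm hc hS⟩

theorem Run.extend {φ : LTL AP} {ξ : ℕ → Set AP} {m : ℕ} {S : Set (Lit AP)} (h : Run φ ξ m S)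
    (k : ℕ) : ∃ S', S ⊆ S' ∧ Run φ ξ (m + k) S' := by
  obtain ⟨χ, hch, hs⟩ := h
  obtain ⟨S', χ', hch', hs'⟩ := hs.exists_run k
  refine ⟨S ∪ S', Set.subset_union_left, χ', ?_, ?_⟩
  · rw [pref_add]
    exact hch.append hch'
  · rwa [suff_suff, Nat.add_comm] at hs'

/-- `ξ^n ⊨_f φ`, witnessed by an expansion whose residual formula holds on `ξ_n`. -/
def PrefixWitness (φ : LTL AP) (ξ : ℕ → Set AP) (n : ℕ) : Prop :=
  ∃ S, Run φ ξ n S ∧ SatF S φ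

namespace PrefixWitness

variable {φ : LTL AP} {ξ : ℕ → Set AP} {n : ℕ}

theorem mono {m : ℕ} (h : PrefixWitness φ ξ m) (hmn : m ≤ n) : PrefixWitness φ ξ n := by
  obtain ⟨k, rfl⟩ := Nat.exists_eq_add_of_le hmn
  obtain ⟨S, hS, hf⟩ := h
  obtain ⟨S', hSS', hS'⟩ := hS.extend k
  exact ⟨S', hS', satF_mono hSS' hf⟩

theorem lift {φ' : LTL AP} (hsub : DNF φ ⊆ DNF φ') (hF : ∀ S, SatF S φ → SatF S φ')
    (h : PrefixWitness φ ξ n) : PrefixWitness φ' ξ (n + 1) :=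
  let ⟨S, hS, hf⟩ := h.mono n.le_succ
  ⟨S, hS.lift hsub, hF S hf⟩

theorem and {φ1 φ2 : LTL AP} {n1 n2 : ℕ} (h1 : PrefixWitness φ1 ξ n1)
    (h2 : PrefixWitness φ2 ξ n2) : PrefixWitness (.and φ1 φ2) ξ (max n1 n2) := by
  obtain ⟨S1, hS1, hf1⟩ := h1.mono (le_max_left n1 n2)
  obtain ⟨S2, hS2, hf2⟩ := h2.mono (le_max_right n1 n2)
  exact ⟨S1 ∪ S2, hS1.and hS2,
    satF_mono Set.subset_union_left hf1, satF_mono Set.subset_union_right hf2⟩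

theorem next (h : PrefixWitness φ (suff ξ 1) n) : PrefixWitness (.next φ) ξ (n + 1) :=
  let ⟨S, hS, hf⟩ := h
  ⟨∅ ∪ S, .cons rfl (satConj_empty _) hS, satF_mono Set.subset_union_right hf⟩

theorem cons_and {ρ θ : LTL AP} (hdnf : ∀ c ∈ DNF ρ, (c.1, .and c.2 θ) ∈ DNF θ)
    (hρ : Sat ξ ρ) (h : PrefixWitness θ (suff ξ 1) n) : PrefixWitness θ ξ (n + 1) := by
  obtain ⟨S, hS, hf⟩ := h
  obtain ⟨S', hS'⟩ := hρ.exists_run (n + 1)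
  exact ⟨S' ∪ S, hS'.cons_and hdnf hS, satF_mono Set.subset_union_right hf⟩

theorem rel_of_sat_suff_one {φ1 φ2 : LTL AP} (h2 : PrefixWitness φ2 ξ n)
    (h : Sat (suff ξ 1) (.rel φ1 φ2)) : PrefixWitness (.rel φ1 φ2) ξ (n + 1) := by
  obtain ⟨S, hS, hf⟩ := h2.mono n.le_succ
  obtain ⟨S', hS'⟩ := h.exists_run n
  exact ⟨S ∪ S', hS.cons_and (fun c hc => Or.inr ⟨c, hc, rfl⟩) hS',
    satF_mono Set.subset_union_left hf⟩

end PrefixWitness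

theorem Sat.exists_prefixWitness_untl {φ1 φ2 : LTL AP}
    (ih2 : ∀ {ξ}, Sat ξ φ2 → ∃ n, PrefixWitness φ2 ξ n) {ξ : ℕ → Set AP}
    (h : Sat ξ (.untl φ1 φ2)) : ∃ n, PrefixWitness (.untl φ1 φ2) ξ n := by
  obtain ⟨i, hi, hj⟩ := h
  induction i generalizing ξ with
  | zero =>
    obtain ⟨n, h2⟩ := ih2 hi
    exact ⟨n + 1, h2.lift Set.subset_union_left fun _ => id⟩
  | succ i ih =>
    obtain ⟨h1, hj⟩ := forall_lt_succ_sat_suff hj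
    obtain ⟨n, h⟩ := ih (ξ := suff ξ 1) (by rwa [suff_suff]) hj
    exact ⟨n + 1, h.cons_and (fun c hc => Or.inr ⟨c, hc, rfl⟩) h1⟩

theorem Sat.exists_prefixWitness_rel {φ1 φ2 : LTL AP}
    (ih1 : ∀ {ξ}, Sat ξ φ1 → ∃ n, PrefixWitness φ1 ξ n)
    (ih2 : ∀ {ξ}, Sat ξ φ2 → ∃ n, PrefixWitness φ2 ξ n) {ξ : ℕ → Set AP}
    (h : Sat ξ (.rel φ1 φ2)) : ∃ n, PrefixWitness (.rel φ1 φ2) ξ n := by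
  rcases h with hall | ⟨i, hi1, hi2, hj⟩
  · obtain ⟨n, h2⟩ := ih2 (hall 0)
    exact ⟨n + 1, h2.rel_of_sat_suff_one (Or.inl fun i => by rw [suff_suff]; exact hall (i + 1))⟩
  induction i generalizing ξ with
  | zero =>
    obtain ⟨_, h1⟩ := ih1 hi1
    obtain ⟨_, h2⟩ := ih2 hi2
    exact ⟨_, (h1.and h2).lift Set.subset_union_left fun S (hf : SatF S (.and φ1 φ2)) => hf.2⟩
  | succ i ih =>
    obtain ⟨h2, hj⟩ := forall_lt_succ_sat_suff hj
    obtain ⟨n, h⟩ := ih (ξ := suff ξ 1) (by rwa [suff_suff]) (by rwa [suff_suff]) hj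
    exact ⟨n + 1, h.cons_and (fun c hc => Or.inr ⟨c, hc, rfl⟩) h2⟩

theorem Sat.exists_prefixWitness {φ : LTL AP} :
    ∀ {ξ : ℕ → Set AP}, Sat ξ φ → ∃ n, PrefixWitness φ ξ n := by
  induction φ with
  | tt => exact fun h => ⟨0, ∅, .zero h, trivial⟩
  | atom a =>
    exact fun h => ⟨1, _,
      .cons (α := {Lit.pos a}) (ψ := .tt) rfl (satConj_singleton h) (.zero trivial), Or.inl rfl⟩
  | natom a =>
    exact fun h => ⟨1, _,
      .cons (α := {Lit.neg a}) (ψ := .tt) rfl (satConj_singleton h) (.zero trivial), Or.inl rfl⟩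
  | and _ _ ih1 ih2 =>
    intro ξ h
    obtain ⟨_, h1⟩ := ih1 h.1
    obtain ⟨_, h2⟩ := ih2 h.2
    exact ⟨_, h1.and h2⟩
  | or _ _ ih1 ih2 =>
    rintro ξ (h | h)
    · obtain ⟨n, h1⟩ := ih1 h
      exact ⟨n + 1, h1.lift Set.subset_union_left fun _ => Or.inl⟩
    · obtain ⟨n, h2⟩ := ih2 h
      exact ⟨n + 1, h2.lift Set.subset_union_right fun _ => Or.inr⟩
  | untl _ _ _ ih2 => exact fun h => h.exists_prefixWitness_untl ih2
  | rel _ _ ih1 ih2 => exact fun h => h.exists_prefixWitness_rel ih1 ih2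
  | next _ ih =>
    intro ξ h
    obtain ⟨n, h⟩ := ih h
    exact ⟨n + 1, h.next⟩

/-- if `ξ ⊨ φ` then some prefix `ξ^n` with `n ≥ 1` has `ξ^n ⊨_f φ`. -/
theorem sat_prefix_satWF {AP : Type} (φ : LTL AP) (ξ : ℕ → Set AP) (h : Sat ξ φ) :
    ∃ n : ℕ, 1 ≤ n ∧ SatWF (pref ξ n) φ := by
  obtain ⟨n, hn⟩ := h.exists_prefixWitness
  obtain ⟨S, ⟨χ, hch, -⟩, hf⟩ := hn.mono n.le_succ
  exact ⟨n + 1, Nat.le_add_left 1 n, S, χ, hch, hf⟩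

end DNFLTL
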